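/- Let L be a centerless Lie superalgebra and δ a super-biderivation of L vanishing on L' × L' (δ(L',L') = 0) that additionally satisfies the derivation-in-second-argument identity δ(u,[x,y]) = [δ(u,x),y] + (-1)^{(|δ|+|u|)|x|}[x, δ(u,y)]. Then δ(L, L) ⊆ Z_L(L'), i.e., δ is a special super-biderivation. -/
import Mathlib


/-- The sign `(-1)^(i*j)` for degrees `i j : ZMod 2`, as an element of the field `F`. -/
def ssign (F : Type*) [Field F] (i j : ZMod 2) : F :=
  if i * j = 1 then -1 else 1

/-- A Lie superalgebra structure on an `F`-module `L`: a bilinear bracket together with a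
`ZMod 2`-grading by submodules, such that the bracket is graded, super-skewsymmetric and
satisfies the super Jacobi identity on homogeneous elements. -/
structure LieSuperAlg (F : Type*) [Field F] (L : Type*) [AddCommGroup L] [Module F L] where
  br : L → L → L
  br_add_left : ∀ x y z : L, br (x + y) z = br x z + br y z
  br_smul_left : ∀ (c : F) (x z : L), br (c • x) z = c • br x z
  br_add_right : ∀ x y z : L, br x (y + z) = br x y + br x z
  br_smul_right : ∀ (c : F) (x z : L), br x (c • z) = c • br x z
  G : ZMod 2 → Submodule F L
  isInternal : DirectSum.IsInternal G
  br_deg : ∀ {i j : ZMod 2} {x y : L}, x ∈ G i → y ∈ G j → br x y ∈ G (i + j)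
  super_skew : ∀ {i j : ZMod 2} {x y : L}, x ∈ G i → y ∈ G j →
    br x y = -(ssign F i j • br y x)
  super_jacobi : ∀ {i j k : ZMod 2} {x y z : L}, x ∈ G i → y ∈ G j → z ∈ G k →
    br x (br y z) = br (br x y) z + ssign F i j • br y (br x z)

variable {F : Type*} [Field F] {L : Type*} [AddCommGroup L] [Module F L]

/-- `δ : L × L → L` is a super-biderivation of degree `τ`. -/
structure IsSuperBiderivation (A : LieSuperAlg F L) (τ : ZMod 2) (δ : L → L → L) : Prop where
  add_left : ∀ x y z : L, δ (x + y) z = δ x z + δ y z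
  smul_left : ∀ (c : F) (x z : L), δ (c • x) z = c • δ x z
  add_right : ∀ x y z : L, δ x (y + z) = δ x y + δ x z
  smul_right : ∀ (c : F) (x z : L), δ x (c • z) = c • δ x z
  deg : ∀ {i j : ZMod 2} {x y : L}, x ∈ A.G i → y ∈ A.G j → δ x y ∈ A.G (i + j + τ)
  skew : ∀ {i j : ZMod 2} {x y : L}, x ∈ A.G i → y ∈ A.G j →
    δ x y = -(ssign F i j • δ y x)
  leibniz : ∀ {i j k : ZMod 2} {x y z : L}, x ∈ A.G i → y ∈ A.G j → z ∈ A.G k →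
    δ (A.br x y) z = ssign F τ i • A.br x (δ y z) + ssign F j k • A.br (δ x z) y

/-- `f : L → L` is an even linear super-commuting map. -/
structure IsSuperCommuting (A : LieSuperAlg F L) (f : L → L) : Prop where
  map_add : ∀ x y : L, f (x + y) = f x + f y
  map_smul : ∀ (c : F) (x : L), f (c • x) = c • f x
  even : ∀ {i : ZMod 2} {x : L}, x ∈ A.G i → f x ∈ A.G i
  comm : ∀ x y : L, A.br (f x) y = A.br x (f y)

/-- `γ : L → L` is a homogeneous element of the centroid `Γ(L)`, of degree `τ`. -/
structure InCentroid (A : LieSuperAlg F L) (τ : ZMod 2) (γ : L → L) : Prop where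
  map_add : ∀ x y : L, γ (x + y) = γ x + γ y
  map_smul : ∀ (c : F) (x : L), γ (c • x) = c • γ x
  deg : ∀ {i : ZMod 2} {x : L}, x ∈ A.G i → γ x ∈ A.G (i + τ)
  centroid : ∀ {i j : ZMod 2} {x y : L}, x ∈ A.G i → y ∈ A.G j →
    γ (A.br x y) = ssign F τ i • A.br x (γ y)

/-- The derived subalgebra `L' = [L, L]`, the span of all brackets. -/
def derived (A : LieSuperAlg F L) : Submodule F L :=
  Submodule.span F {z : L | ∃ x y : L, z = A.br x y}

/-- The center `Z(L)` as a submodule. -/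
def centerSub (A : LieSuperAlg F L) : Submodule F L where
  carrier := {v : L | ∀ x : L, A.br x v = 0}
  add_mem' := by
    intro a b ha hb x
    rw [A.br_add_right, ha x, hb x, add_zero]
  zero_mem' := by
    intro x
    simpa using A.br_smul_right (0 : F) x 0
  smul_mem' := by
    intro c a ha x
    rw [A.br_smul_right, ha x, smul_zero]

section ssignAux

lemma zmod2cases : ∀ i : ZMod 2, i = 0 ∨ i = 1 := by decide

lemma ssign00 : ssign F 0 0 = 1 := by rw [ssign, if_neg (by decide)]
lemma ssign01 : ssign F 0 1 = 1 := by rw [ssign, if_neg (by decide)]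
lemma ssign10 : ssign F 1 0 = 1 := by rw [ssign, if_neg (by decide)]
lemma ssign11 : ssign F 1 1 = -1 := by rw [ssign, if_pos (by decide)]

lemma ssign_mul_self (i j : ZMod 2) : ssign F i j * ssign F i j = 1 := by
  rw [ssign]; split_ifs <;> norm_num

lemma ssign_add_left (i j k : ZMod 2) : ssign F (i+j) k = ssign F i k * ssign F j k := by
  rcases zmod2cases i with rfl|rfl <;> rcases zmod2cases j with rfl|rfl <;>
  rcases zmod2cases k with rfl|rfl <;>
  simp only [show ((1:ZMod 2)+1) = 0 by decide, zero_add, add_zero,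
    ssign00, ssign01, ssign10, ssign11] <;> norm_num

lemma ssign_add_right (i j k : ZMod 2) : ssign F i (j+k) = ssign F i j * ssign F i k := by
  rcases zmod2cases i with rfl|rfl <;> rcases zmod2cases j with rfl|rfl <;>
  rcases zmod2cases k with rfl|rfl <;>
  simp only [show ((1:ZMod 2)+1) = 0 by decide, zero_add, add_zero,
    ssign00, ssign01, ssign10, ssign11] <;> norm_num

lemma ssign_smul_smul (i j : ZMod 2) (x : L) :
    ssign F i j • ssign F i j • x = x := by rw [smul_smul, ssign_mul_self, one_smul]

/-- every element decomposes into homogeneous components -/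
lemma hom_decomp (A : LieSuperAlg F L) (x : L) :
    ∃ x₀ x₁, x₀ ∈ A.G 0 ∧ x₁ ∈ A.G 1 ∧ x = x₀ + x₁ := by
  have htop : (⨆ i, A.G i) = ⊤ := A.isInternal.submodule_iSup_eq_top
  have hx : x ∈ (⨆ i, A.G i) := htop ▸ Submodule.mem_top
  induction hx using Submodule.iSup_induction' with
  | mem i z hz =>
      rcases zmod2cases i with rfl|rfl
      · exact ⟨z, 0, hz, Submodule.zero_mem _, (add_zero z).symm⟩
      · exact ⟨0, z, Submodule.zero_mem _, hz, (zero_add z).symm⟩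
  | zero => exact ⟨0, 0, Submodule.zero_mem _, Submodule.zero_mem _, (add_zero 0).symm⟩
  | add a b _ _ ha hb =>
      obtain ⟨a0, a1, h0, h1, rfl⟩ := ha
      obtain ⟨b0, b1, g0, g1, rfl⟩ := hb
      exact ⟨a0+b0, a1+b1, Submodule.add_mem _ h0 g0, Submodule.add_mem _ h1 g1, by abel⟩

end ssignAux

theorem stmt12 (h2 : (2 : F) ≠ 0) (A : LieSuperAlg F L)
    (hcent : ∀ v : L, (∀ x : L, A.br x v = 0) → v = 0)
    (τ : ZMod 2) (δ : L → L → L) (hδ : IsSuperBiderivation A τ δ)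
    (hvan : ∀ p ∈ derived A, ∀ q ∈ derived A, δ p q = 0)
    (hsecond : ∀ {i j k : ZMod 2} {u x y : L}, u ∈ A.G i → x ∈ A.G j → y ∈ A.G k →
      δ u (A.br x y) = A.br (δ u x) y + ssign F (τ + i) j • A.br x (δ u y)) :
    ∀ x y : L, ∀ p ∈ derived A, A.br p (δ x y) = 0 := by
  have hmem : ∀ u v : L, A.br u v ∈ derived A := fun u v => Submodule.subset_span ⟨u, v, rfl⟩
  have hbr0 : ∀ u : L, A.br u 0 = 0 := by
    intro u; have h := A.br_smul_right 0 u 0; rw [zero_smul, zero_smul] at h; exact h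
  have hbr0' : ∀ u : L, A.br 0 u = 0 := by
    intro u; have h := A.br_smul_left 0 0 u; rw [zero_smul, zero_smul] at h; exact h
  have hbrneg' : ∀ u v : L, A.br u (-v) = -A.br u v := by
    intro u v; have h := A.br_smul_right (-1) u v; rw [neg_one_smul, neg_one_smul] at h; exact h
  have hbrneg : ∀ u v : L, A.br (-u) v = -A.br u v := by
    intro u v; have h := A.br_smul_left (-1) u v; rw [neg_one_smul, neg_one_smul] at h; exact h
  -- Step 1 : δ(L', y) centralizes brackets
  have L2 : ∀ (l n ia ib : ZMod 2) (q w a b : L), q ∈ A.G l → q ∈ derived A → w ∈ A.G n →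
      a ∈ A.G ia → b ∈ A.G ib → A.br (δ q w) (A.br a b) = 0 := by
    intro l n ia ib q w a b hq hq' hw ha hb
    have h := hsecond hq hw (A.br_deg ha hb)
    rw [hvan q hq' _ (hmem w (A.br a b)), hvan q hq' _ (hmem a b), hbr0, smul_zero,
      add_zero] at h
    exact h.symm
  -- derivation-type identity for δ(q,·), q ∈ L'
  have L3 : ∀ (l n o : ZMod 2) (q w z : L), q ∈ A.G l → q ∈ derived A → w ∈ A.G n →
      z ∈ A.G o → A.br (δ q w) z = -(ssign F (τ + l) n • A.br w (δ q z)) := by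
    intro l n o q w z hq hq' hw hz
    have h := hsecond hq hw hz
    rw [hvan q hq' _ (hmem w z)] at h
    exact eq_neg_of_add_eq_zero_left h.symm
  -- Jacobi juggling lemma
  have LJ : ∀ (i j k l : ZMod 2) (a c d q : L), a ∈ A.G i → c ∈ A.G j → d ∈ A.G k →
      q ∈ A.G l → q ∈ derived A →
      A.br (A.br a (δ q c)) d
        = -((ssign F (τ + l) j * ssign F i j) • A.br c (A.br a (δ q d))) := by
    intro i j k l a c d q ha hc hd hq hq'
    have hwc : δ q c ∈ A.G (l + j + τ) := hδ.deg hq hc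
    have hwd : δ q d ∈ A.G (l + k + τ) := hδ.deg hq hd
    have j1 := A.super_jacobi ha hwc hd
    rw [L2 l j i k q c a d hq hq' hc ha hd, smul_zero, add_zero] at j1
    have j2 := A.super_jacobi ha hc hwd
    have sk := A.super_skew (A.br_deg ha hc) hwd
    rw [L2 l k i j q d a c hq hq' hd ha hc, smul_zero, neg_zero] at sk
    rw [sk, zero_add] at j2
    calc A.br (A.br a (δ q c)) d = A.br a (A.br (δ q c) d) := j1.symm
      _ = A.br a (-(ssign F (τ+l) j • A.br c (δ q d))) := by
            rw [L3 l j k q c d hq hq' hc hd]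
      _ = -(ssign F (τ+l) j • A.br a (A.br c (δ q d))) := by
            rw [hbrneg', A.br_smul_right]
      _ = -(ssign F (τ+l) j • (ssign F i j • A.br c (A.br a (δ q d)))) := by rw [j2]
      _ = -((ssign F (τ+l) j * ssign F i j) • A.br c (A.br a (δ q d))) := by rw [smul_smul]
  -- the key swap identity (raw form)
  have L5 : ∀ (i j k l : ZMod 2) (a c d q : L), a ∈ A.G i → c ∈ A.G j → d ∈ A.G k →
      q ∈ A.G l → q ∈ derived A →
      ssign F l j • A.br (A.br (δ a c) q) d
        + (ssign F τ j * ssign F i j * ssign F l j * ssign F l k)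
            • A.br c (A.br (δ a d) q) = 0 := by
    intro i j k l a c d q ha hc hd hq hq'
    have E1 := hsecond (A.br_deg ha hq) hc hd
    rw [hvan _ (hmem a q) _ (hmem c d)] at E1
    rw [hδ.leibniz ha hq hc, hδ.leibniz ha hq hd] at E1
    rw [A.br_add_left, A.br_smul_left, A.br_smul_left] at E1
    rw [A.br_add_right, A.br_smul_right, A.br_smul_right] at E1
    rw [LJ i j k l a c d q ha hc hd hq hq'] at E1
    rw [show ssign F (τ + (i + l)) j = ssign F τ j * (ssign F i j * ssign F l j) by
          rw [ssign_add_left, ssign_add_left],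
        show ssign F (τ + l) j = ssign F τ j * ssign F l j from ssign_add_left τ l j] at E1
    linear_combination (norm := module) -E1
  -- solved form
  have L5' : ∀ (i j k l : ZMod 2) (a c d q : L), a ∈ A.G i → c ∈ A.G j → d ∈ A.G k →
      q ∈ A.G l → q ∈ derived A →
      A.br (A.br (δ a c) q) d
        = -((ssign F τ j * ssign F i j * ssign F l k) • A.br c (A.br (δ a d) q)) := by
    intro i j k l a c d q ha hc hd hq hq'
    have h1 : ssign F l j • A.br (A.br (δ a c) q) d
        = -((ssign F τ j * ssign F i j * ssign F l j * ssign F l k)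
            • A.br c (A.br (δ a d) q)) :=
      eq_neg_of_add_eq_zero_left (L5 i j k l a c d q ha hc hd hq hq')
    have h2 := congrArg (fun w => ssign F l j • w) h1
    simp only [smul_neg, smul_smul] at h2
    rw [ssign_mul_self, one_smul] at h2
    rw [show ssign F l j * (ssign F τ j * ssign F i j * ssign F l j * ssign F l k)
          = ssign F τ j * ssign F i j * ssign F l k by
        linear_combination (ssign F τ j * ssign F i j * ssign F l k) *
          ssign_mul_self (F := F) l j] at h2
    exact h2
  -- the dance : T = -T hence T = 0
  have L6 : ∀ (i j k l : ZMod 2) (a c d q : L), a ∈ A.G i → c ∈ A.G j → d ∈ A.G k →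
      q ∈ A.G l → q ∈ derived A → A.br d (A.br (δ a c) q) = 0 := by
    intro i j k l a c d q ha hc hd hq hq'
    have hVac : A.br (δ a c) q ∈ A.G (i + j + τ + l) := A.br_deg (hδ.deg ha hc) hq
    have hVda : A.br (δ d a) q ∈ A.G (k + i + τ + l) := A.br_deg (hδ.deg hd ha) hq
    have hVcd : A.br (δ c d) q ∈ A.G (j + k + τ + l) := A.br_deg (hδ.deg hc hd) hq
    have g1 := A.super_skew hd hVac
    have g2 := L5' i j k l a c d q ha hc hd hq hq'
    have g3 : A.br c (A.br (δ a d) q) = -(ssign F i k • A.br c (A.br (δ d a) q)) := by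
      rw [hδ.skew ha hd, hbrneg, A.br_smul_left, hbrneg', A.br_smul_right]
    have g4 := A.super_skew hc hVda
    have g5 := L5' k i j l d a c q hd ha hc hq hq'
    have g6 : A.br a (A.br (δ d c) q) = -(ssign F k j • A.br a (A.br (δ c d) q)) := by
      rw [hδ.skew hd hc, hbrneg, A.br_smul_left, hbrneg', A.br_smul_right]
    have g7 := A.super_skew ha hVcd
    have g8 := L5' j k i l c d a q hc hd ha hq hq'
    have g9 : A.br d (A.br (δ c a) q) = -(ssign F j i • A.br d (A.br (δ a c) q)) := by
      rw [hδ.skew hc ha, hbrneg, A.br_smul_left, hbrneg', A.br_smul_right]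
    rw [g2, g3, g4, g5, g6, g7, g8, g9] at g1
    simp only [smul_neg, neg_neg, smul_smul] at g1
    have hC : ssign F k (i + j + τ + l) *
          (ssign F τ j * ssign F i j * ssign F l k *
            (ssign F i k *
              (ssign F j (k + i + τ + l) *
                (ssign F τ i * ssign F k i * ssign F l j *
                  (ssign F k j *
                    (ssign F i (j + k + τ + l) *
                      (ssign F τ k * ssign F j k * ssign F l i * ssign F j i))))))) = 1 := by
      simp only [ssign_add_right]
      rcases zmod2cases τ with rfl|rfl <;> rcases zmod2cases i with rfl|rfl <;>
        rcases zmod2cases j with rfl|rfl <;> rcases zmod2cases k with rfl|rfl <;>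
        rcases zmod2cases l with rfl|rfl <;>
      simp only [ssign00, ssign01, ssign10, ssign11] <;> norm_num
    rw [hC, one_smul] at g1
    have hTT : (2 : F) • A.br d (A.br (δ a c) q) = 0 := by
      rw [two_smul]
      nth_rewrite 1 [g1]
      exact neg_add_cancel _
    rcases smul_eq_zero.mp hTT with hz | hz
    · exact absurd hz h2
    · exact hz
  -- V(a,c) = 0 by centerlessness
  have L7 : ∀ (i j l₁ l₂ : ZMod 2) (a c c₀ d₀ : L), a ∈ A.G i → c ∈ A.G j →
      c₀ ∈ A.G l₁ → d₀ ∈ A.G l₂ → A.br (δ a c) (A.br c₀ d₀) = 0 := by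
    intro i j l₁ l₂ a c c₀ d₀ ha hc hc₀ hd₀
    apply hcent
    intro u
    obtain ⟨u₀, u₁, hu₀, hu₁, rfl⟩ := hom_decomp A u
    rw [A.br_add_left,
      L6 i j 0 (l₁ + l₂) a c u₀ (A.br c₀ d₀) ha hc hu₀ (A.br_deg hc₀ hd₀) (hmem c₀ d₀),
      L6 i j 1 (l₁ + l₂) a c u₁ (A.br c₀ d₀) ha hc hu₁ (A.br_deg hc₀ hd₀) (hmem c₀ d₀),
      add_zero]
  -- assemble
  intro x y p hp
  have main : ∀ (m n : ZMod 2) (x' y' : L), x' ∈ A.G m → y' ∈ A.G n →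
      A.br p (δ x' y') = 0 := by
    intro m n x' y' hx' hy'
    induction hp using Submodule.span_induction with
    | mem z hz =>
        obtain ⟨u, v, rfl⟩ := hz
        obtain ⟨u₀, u₁, hu₀, hu₁, rfl⟩ := hom_decomp A u
        obtain ⟨v₀, v₁, hv₀, hv₁, rfl⟩ := hom_decomp A v
        have key : ∀ (iu iv : ZMod 2) (u' v' : L), u' ∈ A.G iu → v' ∈ A.G iv →
            A.br (A.br u' v') (δ x' y') = 0 := by
          intro iu iv u' v' hu' hv'
          rw [A.super_skew (A.br_deg hu' hv') (hδ.deg hx' hy'),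
            L7 m n iu iv x' y' u' v' hx' hy' hu' hv', smul_zero, neg_zero]
        simp only [A.br_add_left, A.br_add_right]
        rw [key 0 0 u₀ v₀ hu₀ hv₀, key 0 1 u₀ v₁ hu₀ hv₁,
          key 1 0 u₁ v₀ hu₁ hv₀, key 1 1 u₁ v₁ hu₁ hv₁]
        simp
    | zero => exact hbr0' _
    | add a b _ _ ha hb => rw [A.br_add_left, ha, hb, add_zero]
    | smul c a _ ha => rw [A.br_smul_left, ha, smul_zero]
  obtain ⟨x₀, x₁, hx₀, hx₁, rfl⟩ := hom_decomp A x
  obtain ⟨y₀, y₁, hy₀, hy₁, rfl⟩ := hom_decomp A y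
  rw [hδ.add_left, hδ.add_right, hδ.add_right, A.br_add_right, A.br_add_right, A.br_add_right,
    main 0 0 x₀ y₀ hx₀ hy₀, main 0 1 x₀ y₁ hx₀ hy₁,
    main 1 0 x₁ y₀ hx₁ hy₀, main 1 1 x₁ y₁ hx₁ hy₁]
  simp
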